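/- arXiv:2204.11106 — 4 statements merged into one kernel-verified Lean document; each statement's English description precedes it below -/
import Mathlib

section
/- Let s ≥ 1 and 0 < τ ≤ 1/2. Let S be a finite set of items, each item j having a weight vector B_j ∈ [0,1]^s, such that the coordinatewise sum of all weight vectors of S is at most (1, 1+τ, ..., 1+τ) (first coordinate at most 1, all others at most 1+τ). Then S can be partitioned into s subsets S_1, ..., S_s such that for each h, the coordinatewise sum of the weight vectors of the items in S_h is at most the all-ones vector. -/
/-!
Match items to coordinates `i ≠ 0` along entries `B x i > 1/2`, taking a maximal matching. A matched
item gets its coordinate as a bin of its own. A coordinate `i` matched to `x` keeps at most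
`1 + τ - 1/2 ≤ 1` of the remaining weight, and coordinate `0` carries at most `1` in total, so the
unmatched items only have to be packed into the unmatched bins with respect to the unmatched nonzero
coordinates, where all their entries are at most `1/2`. These coordinates are one fewer than those
bins, so a greedy packing never gets stuck: if an item fits in no bin, two bins overflow at the same
coordinate, and together with the item that coordinate would carry more than `3/2 ≥ 1 + τ`.
-/

open Finset

theorem exists_maximal_matching {α β : Type*} [DecidableEq α] [DecidableEq β] [Nonempty β]
    (A : Finset α) (C : Finset β) (r : α → β → Prop) :
    ∃ X ⊆ A, ∃ e : α → β, Set.InjOn e X ∧ (∀ x ∈ X, e x ∈ C ∧ r x (e x)) ∧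
      ∀ x ∈ A \ X, ∀ c ∈ C \ X.image e, ¬ r x c := by
  induction A using Finset.induction_on with
  | empty => exact ⟨∅, subset_rfl, Classical.arbitrary _, by simp⟩
  | @insert a A ha ih =>
    obtain ⟨X, hXA, e, he_inj, he, hmax⟩ := ih
    have haX : a ∉ X := fun h => ha (hXA h)
    by_cases hext : ∃ c ∈ C \ X.image e, r a c
    · obtain ⟨c, hc, hac⟩ := hext
      have hEq : Set.EqOn e (Function.update e a c) X := fun x hx =>
        (Function.update_of_ne (ne_of_mem_of_not_mem hx haX) c e).symm
      have himage : X.image (Function.update e a c) = X.image e := (image_congr hEq).symm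
      refine ⟨insert a X, insert_subset_insert a hXA, Function.update e a c, ?_, ?_, ?_⟩
      · rw [coe_insert, Set.injOn_insert haX, Function.update_self, ← coe_image, himage]
        exact ⟨he_inj.congr hEq, (mem_sdiff.1 hc).2⟩
      · rintro x hx
        rcases mem_insert.1 hx with rfl | hx
        · simpa using ⟨(mem_sdiff.1 hc).1, hac⟩
        · rw [← hEq hx]
          exact he x hx
      · intro x hx c' hc'
        rw [image_insert, himage] at hc'
        simp only [mem_sdiff, mem_insert, not_or] at hx hc'
        exact hmax x (mem_sdiff.2 ⟨hx.1.resolve_left hx.2.1, hx.2.2⟩) c'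
          (mem_sdiff.2 ⟨hc'.1, hc'.2.2⟩)
    · refine ⟨X, hXA.trans (subset_insert a A), e, he_inj, he, fun x hx c hc hxc => ?_⟩
      rcases mem_insert.1 (mem_sdiff.1 hx).1 with rfl | hxA
      · exact hext ⟨c, hc, hxc⟩
      · exact hmax x (mem_sdiff.2 ⟨hxA, (mem_sdiff.1 hx).2⟩) c hc hxc

theorem sum_filter_eq_add_sum_filter_eq_le {ι β : Type*} [DecidableEq β] {T : Finset ι}
    {g : ι → β} {w : ι → ℝ} (hw : ∀ x ∈ T, 0 ≤ w x) {v v' : β} (hvv' : v ≠ v') :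
    ∑ x ∈ T with g x = v, w x + ∑ x ∈ T with g x = v', w x ≤ ∑ x ∈ T, w x := by
  have hsub : {x ∈ T | g x = v'} ⊆ {x ∈ T | ¬ g x = v} := fun x hx => by
    simp only [mem_filter] at hx ⊢
    exact ⟨hx.1, fun hxv => hvv' (hxv.symm.trans hx.2)⟩
  have := sum_le_sum_of_subset_of_nonneg hsub fun x hx _ => hw x (mem_filter.1 hx).1
  linarith [sum_filter_add_sum_filter_not T (fun x => g x = v) w]

theorem sum_filter_update_eq {ι β : Type*} [DecidableEq ι] [DecidableEq β] {T : Finset ι}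
    {x : ι} (hx : x ∉ T) (g : ι → β) (v u : β) (w : ι → ℝ) :
    ∑ y ∈ insert x T with Function.update g x v y = u, w y =
      (if v = u then w x else 0) + ∑ y ∈ T with g y = u, w y := by
  rw [sum_filter, sum_insert hx, Function.update_self, sum_filter]
  congr 1
  refine sum_congr rfl fun y hy => ?_
  rw [Function.update_of_ne (ne_of_mem_of_not_mem hy hx)]

theorem exists_greedy_packing {ι β κ : Type*} [DecidableEq ι] [DecidableEq β]
    (T : Finset ι) (V : Finset β) (I : Finset κ) (hIV : #I < #V) (w : ι → κ → ℝ)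
    (hw0 : ∀ x ∈ T, ∀ i ∈ I, 0 ≤ w x i) (hw_half : ∀ x ∈ T, ∀ i ∈ I, w x i ≤ 1 / 2)
    (hsum : ∀ i ∈ I, ∑ x ∈ T, w x i ≤ 3 / 2) :
    ∃ g : ι → β, (∀ x ∈ T, g x ∈ V) ∧ ∀ v ∈ V, ∀ i ∈ I, ∑ x ∈ T with g x = v, w x i ≤ 1 := by
  obtain ⟨v₀, hv₀⟩ := card_pos.1 (I.card.zero_le.trans_lt hIV)
  induction T using Finset.induction_on with
  | empty => exact ⟨fun _ => v₀, by simp, by simp⟩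
  | @insert x T hx ih =>
    have hw0' : ∀ y ∈ T, ∀ i ∈ I, 0 ≤ w y i := fun y hy => hw0 y (mem_insert_of_mem hy)
    have hsum_insert : ∀ i ∈ I, w x i + ∑ y ∈ T, w y i ≤ 3 / 2 := fun i hi => by
      simpa [sum_insert hx] using hsum i hi
    obtain ⟨g, hgV, hg⟩ := ih hw0' (fun y hy => hw_half y (mem_insert_of_mem hy))
      (fun i hi => by linarith [hsum_insert i hi, hw0 x (mem_insert_self x T) i hi])
    obtain ⟨v, hv, hfit⟩ : ∃ v ∈ V, ∀ i ∈ I, ∑ y ∈ T with g y = v, w y i + w x i ≤ 1 := by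
      by_contra! hstuck
      have : Nonempty κ := ⟨(hstuck v₀ hv₀).choose⟩
      choose! φ hφI hφ using hstuck
      obtain ⟨v, hv, v', hv', hvv', hφφ⟩ := exists_ne_map_eq_of_card_lt_of_maps_to hIV hφI
      have hpair := sum_filter_eq_add_sum_filter_eq_le (g := g)
        (fun y hy => hw0' y hy (φ v) (hφI v hv)) hvv'
      linarith [hφ v hv, hφφ ▸ hφ v' hv', hsum_insert _ (hφI v hv),
        hw_half x (mem_insert_self x T) _ (hφI v hv)]
    refine ⟨Function.update g x v, fun y hy => ?_, fun u hu i hi => ?_⟩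
    · rcases mem_insert.1 hy with rfl | hy
      · simpa using hv
      · rw [Function.update_of_ne (ne_of_mem_of_not_mem hy hx)]
        exact hgV y hy
    · rw [sum_filter_update_eq hx]
      split_ifs with hvu
      · subst hvu
        linarith [hfit i hi]
      · simpa using hg u hu i hi

section Piecewise

variable {ι β : Type*} [DecidableEq ι] [DecidableEq β] {S X : Finset ι} {e g : ι → β}

theorem sum_filter_piecewise_eq_le {w : ι → ℝ} (hw : ∀ j ∈ S, 0 ≤ w j) (hXS : X ⊆ S)
    (he : Set.InjOn e X) (hg : ∀ x ∈ S \ X, g x ∉ X.image e) {x₀ : ι} (hx₀ : x₀ ∈ X) :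
    ∑ j ∈ S with X.piecewise e g j = e x₀, w j ≤ w x₀ := by
  have hsub : {j ∈ S | X.piecewise e g j = e x₀} ⊆ {x₀} := fun y hy => by
    obtain ⟨hyS, hy⟩ := mem_filter.1 hy
    by_cases hyX : y ∈ X
    · rw [piecewise_eq_of_mem _ _ _ hyX] at hy
      exact mem_singleton.2 (he hyX hx₀ hy)
    · rw [piecewise_eq_of_notMem _ _ _ hyX] at hy
      exact absurd (mem_image_of_mem e hx₀) (hy ▸ hg y (mem_sdiff.2 ⟨hyS, hyX⟩))
  simpa using sum_le_sum_of_subset_of_nonneg hsub fun j hj _ =>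
    mem_singleton.1 hj ▸ hw x₀ (hXS hx₀)

theorem filter_piecewise_eq_of_notMem_image {h : β} (hh : h ∉ X.image e) :
    {j ∈ S | X.piecewise e g j = h} = {j ∈ S \ X | g j = h} := by
  ext y
  by_cases hyX : y ∈ X
  · simp only [mem_filter, piecewise_eq_of_mem _ _ _ hyX, mem_sdiff, hyX, not_true_eq_false,
      and_false, false_and, iff_false, not_and]
    rintro - rfl
    exact hh (mem_image_of_mem e hyX)
  · simp [hyX]

end Piecewise

theorem stmt_0_general {ι : Type*} (s : ℕ) (hs : 1 ≤ s)
    (τ : ℝ) (hτ1 : τ ≤ 1/2)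
    (S : Finset ι) (B : ι → Fin s → ℝ)
    (hB0 : ∀ j ∈ S, ∀ i, 0 ≤ B j i) (hB1 : ∀ j ∈ S, ∀ i, B j i ≤ 1)
    (hsum1 : ∀ i : Fin s, (i : ℕ) = 0 → ∑ j ∈ S, B j i ≤ 1)
    (hsum2 : ∀ i : Fin s, (i : ℕ) ≠ 0 → ∑ j ∈ S, B j i ≤ 1 + τ) :
    ∃ f : ι → Fin s, ∀ h : Fin s, ∀ i : Fin s,
      ∑ j ∈ S.filter (fun j => f j = h), B j i ≤ 1 := by
  classical
  set z : Fin s := ⟨0, hs⟩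
  have : Nonempty (Fin s) := ⟨z⟩
  obtain ⟨X, hXS, e, he_inj, he, hmax⟩ :=
    exists_maximal_matching S (univ.erase z) (fun x i => 1 / 2 < B x i)
  set V := univ \ X.image e
  have hzV : z ∈ V := by
    simp only [V, mem_sdiff, mem_univ, mem_image, true_and, not_exists, not_and]
    exact fun x hx hxz => (mem_erase.1 (he x hx).1).1 hxz
  have hsum_sdiff : ∀ i, ∑ j ∈ S \ X, B j i ≤ ∑ j ∈ S, B j i := fun i =>
    sum_le_sum_of_subset_of_nonneg sdiff_subset fun j hj _ => hB0 j hj i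
  obtain ⟨g, hgV, hg⟩ := exists_greedy_packing (S \ X) V (V.erase z) (card_erase_lt_of_mem hzV) B
    (fun x hx i _ => hB0 x (mem_sdiff.1 hx).1 i)
    (fun x hx i hi => not_lt.1 (hmax x hx i (by simpa [V] using hi)))
    (fun i hi => by linarith [hsum_sdiff i, hsum2 i (fun h0 => (mem_erase.1 hi).1 (Fin.ext h0))])
  refine ⟨X.piecewise e g, fun h i => ?_⟩
  by_cases hh : h ∈ X.image e
  · obtain ⟨x₀, hx₀, rfl⟩ := mem_image.1 hh
    exact (sum_filter_piecewise_eq_le (fun j hj => hB0 j hj i) hXS he_inj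
      (fun x hx => (mem_sdiff.1 (hgV x hx)).2) hx₀).trans (hB1 x₀ (hXS hx₀) i)
  rw [filter_piecewise_eq_of_notMem_image hh]
  have hle := sum_le_sum_of_subset_of_nonneg (filter_subset (g · = h) (S \ X))
    fun j hj _ => hB0 j (mem_sdiff.1 hj).1 i
  by_cases hi0 : (i : ℕ) = 0
  · linarith [hsum_sdiff i, hsum1 i hi0]
  by_cases hi : i ∈ X.image e
  · -- the item matched to `i` carries more than `1/2` of its total `1 + τ`
    obtain ⟨q, hq, rfl⟩ := mem_image.1 hi
    linarith [sum_sdiff hXS (f := fun j => B j (e q)), hsum2 _ hi0, (he q hq).2,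
      single_le_sum (fun j hj => hB0 j (hXS hj) (e q)) hq]
  · exact hg h (mem_sdiff.2 ⟨mem_univ h, hh⟩) i
      (mem_erase.2 ⟨fun hiz => hi0 (congrArg Fin.val hiz), mem_sdiff.2 ⟨mem_univ i, hi⟩⟩)

/-- A set of items with weight vectors in `[0,1]^s` whose total weight is at most
`(1, 1+τ, …, 1+τ)` (with `0 < τ ≤ 1/2`) can be partitioned into `s` subsets, each of total
weight at most the all-ones vector. -/
theorem stmt_0 {ι : Type*} [DecidableEq ι] (s : ℕ) (hs : 1 ≤ s)
    (τ : ℝ) (hτ0 : 0 < τ) (hτ1 : τ ≤ 1/2)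
    (S : Finset ι) (B : ι → Fin s → ℝ)
    (hB0 : ∀ j ∈ S, ∀ i, 0 ≤ B j i) (hB1 : ∀ j ∈ S, ∀ i, B j i ≤ 1)
    (hsum1 : ∀ i : Fin s, (i : ℕ) = 0 → ∑ j ∈ S, B j i ≤ 1)
    (hsum2 : ∀ i : Fin s, (i : ℕ) ≠ 0 → ∑ j ∈ S, B j i ≤ 1 + τ) :
    ∃ f : ι → Fin s, ∀ h : Fin s, ∀ i : Fin s,
      ∑ j ∈ S.filter (fun j => f j = h), B j i ≤ 1 :=
  stmt_0_general s hs τ hτ1 S B hB0 hB1 hsum1 hsum2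
end

section
/- Let n ≥ 1, E = 10 · Σ_{i=1}^n 10^i, and Q = 10E. Consider any collection of 5 vectors, each of which is either of the form (10^i, Q − 10^i) for some 1 ≤ i ≤ n, or of the form (E − 10^i − 10^j − 10^k, Q − E + 10^i + 10^j + 10^k) for some 1 ≤ i, j, k ≤ n. Then the sum of the second coordinates of these 5 vectors strictly exceeds 4Q − E. -/
/-! Every item has second coordinate at least `Q - E + 30`: an element item `Q - 10^i` because
`10^i + 30 ≤ 10 · 10^i ≤ E`, a set item because each of its three powers of ten is at least `10`.
Five items therefore weigh at least `5Q - 5E + 150`, which exceeds `4Q - E` since `Q = 10E ≥ 0`. -/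

open Finset

lemma ten_le_ten_pow {i : ℕ} (hi : 1 ≤ i) : (10 : ℤ) ≤ 10 ^ i := by
  simpa using pow_le_pow_right₀ (by norm_num : (1 : ℤ) ≤ 10) hi

lemma ten_pow_le_sum_Icc {n i : ℕ} (hi : i ∈ Icc 1 n) :
    (10 : ℤ) ^ i ≤ ∑ j ∈ Icc 1 n, (10 : ℤ) ^ j :=
  single_le_sum (f := fun j => (10 : ℤ) ^ j) (fun _ _ => by positivity) hi

theorem stmt_5_general (n : ℕ) (E Q : ℤ)
    (hE : E = 10 * ∑ i ∈ Finset.Icc 1 n, (10 : ℤ)^i) (hQ : Q = 10 * E)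
    (v : Fin 5 → ℤ × ℤ)
    (hv : ∀ t, (∃ i ∈ Finset.Icc 1 n, v t = ((10 : ℤ)^i, Q - 10^i)) ∨
      (∃ i ∈ Finset.Icc 1 n, ∃ j ∈ Finset.Icc 1 n, ∃ k ∈ Finset.Icc 1 n,
        v t = (E - 10^i - 10^j - 10^k, Q - E + 10^i + 10^j + 10^k))) :
    4 * Q - E < ∑ t, (v t).2 := by
  have hE_nonneg : 0 ≤ E := by rw [hE]; positivity
  have item_bound : ∀ t, Q - E + 30 ≤ (v t).2 := by
    intro t
    rcases hv t with ⟨i, hi, hvt⟩ | ⟨i, hi, j, hj, k, hk, hvt⟩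
    · have := ten_le_ten_pow (mem_Icc.mp hi).1
      have := ten_pow_le_sum_Icc hi
      rw [hvt]
      linarith
    · have := ten_le_ten_pow (mem_Icc.mp hi).1
      have := ten_le_ten_pow (mem_Icc.mp hj).1
      have := ten_le_ten_pow (mem_Icc.mp hk).1
      rw [hvt]
      linarith
  have total_bound : 5 * (Q - E + 30) ≤ ∑ t, (v t).2 := by
    simpa using card_nsmul_le_sum univ (fun t => (v t).2) _ fun t _ => item_bound t
  linarith

/-- Any 5 item weight vectors (element-items or set-items) have total second
coordinate strictly exceeding the budget `4Q - E`. -/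
theorem stmt_5 (n : ℕ) (hn : 1 ≤ n) (E Q : ℤ)
    (hE : E = 10 * ∑ i ∈ Finset.Icc 1 n, (10 : ℤ)^i) (hQ : Q = 10 * E)
    (v : Fin 5 → ℤ × ℤ)
    (hv : ∀ t, (∃ i ∈ Finset.Icc 1 n, v t = ((10 : ℤ)^i, Q - 10^i)) ∨
      (∃ i ∈ Finset.Icc 1 n, ∃ j ∈ Finset.Icc 1 n, ∃ k ∈ Finset.Icc 1 n,
        v t = (E - 10^i - 10^j - 10^k, Q - E + 10^i + 10^j + 10^k))) :
    4 * Q - E < ∑ t, (v t).2 :=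
  stmt_5_general n E Q hE hQ v hv
end

section
/- Let n ≥ 1, E = 10 · Σ_{i=1}^n 10^i, and Q = 10E. Suppose 4 vectors are chosen, each either an element-item vector (10^i, Q − 10^i) with 1 ≤ i ≤ n or a set-item vector (E − 10^a − 10^b − 10^c, Q − E + 10^a + 10^b + 10^c) with 1 ≤ a, b, c ≤ n distinct, and their coordinatewise sum is at most (E, 4Q − E). Then the sum of the first coordinates is exactly E, exactly one of the 4 vectors is a set-item vector, the other three are element-item vectors with indices i, j, k, and the set-item vector has index set exactly {i, j, k}. -/
/-!
Every item vector has coordinate sum `Q`, so the two budget constraints together force the first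
coordinates to sum to exactly `E`. An element item contributes at most `10^n ≤ E/10` to that sum
and a set item at least `E - 3·10^n ≥ 7E/10`: four element items fall short and two set items
overshoot, so there is exactly one set item. What remains is
`10^a + 10^b + 10^c = 10^i + 10^j + 10^k`, and since no base-10 digit of the right-hand side can
exceed 3, uniqueness of base-10 expansions gives `{a, b, c} = {i, j, k}`.
-/

namespace Multiset

variable {b : ℕ}

theorem sum_map_pow_eq_count_zero_add_mul (s : Multiset ℕ) :
    (s.map (b ^ ·)).sum = s.count 0 + b * (((s.filter (· ≠ 0)).map (· - 1)).map (b ^ ·)).sum := by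
  induction s using Multiset.induction_on with
  | empty => simp
  | cons a s ih =>
    rcases a with _ | a
    · simp only [map_cons, pow_zero, sum_cons, ih, ne_eq, map_map, Function.comp_apply,
        count_cons_self, not_true_eq_false, not_false_eq_true, filter_cons_of_neg]
      ring
    · simp only [map_cons, pow_succ, sum_cons, ih, ne_eq, map_map, Function.comp_apply,
        Nat.add_eq_zero_iff, one_ne_zero, and_false, not_false_eq_true, filter_cons_of_pos,
        add_tsub_cancel_right, Nat.right_eq_add, count_cons_of_ne]
      ring

theorem count_succ_eq_count_map_pred_filter (s : Multiset ℕ) (k : ℕ) :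
    s.count (k + 1) = ((s.filter (· ≠ 0)).map (· - 1)).count k := by
  induction s using Multiset.induction_on with
  | empty => simp
  | cons a s ih => rcases a with _ | a <;> simp [count_cons, ih]

theorem count_eq_sum_map_pow_div_pow_mod {s : Multiset ℕ} (hs : ∀ i, s.count i < b) (k : ℕ) :
    s.count k = (s.map (b ^ ·)).sum / b ^ k % b := by
  induction k generalizing s with
  | zero =>
    rw [sum_map_pow_eq_count_zero_add_mul, pow_zero, Nat.div_one, Nat.add_mul_mod_self_left,
      Nat.mod_eq_of_lt (hs 0)]
  | succ k ih =>
    have hb : 0 < b := (Nat.zero_le _).trans_lt (hs 0)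
    rw [count_succ_eq_count_map_pred_filter,
      ih fun i => count_succ_eq_count_map_pred_filter s i ▸ hs (i + 1),
      sum_map_pow_eq_count_zero_add_mul s, pow_succ', ← Nat.div_div_eq_div_mul,
      Nat.add_mul_div_left _ _ hb, Nat.div_eq_of_lt (hs 0), zero_add]

theorem eq_of_sum_map_pow_eq {s t : Multiset ℕ} (hs : ∀ i, s.count i < b)
    (ht : ∀ i, t.count i < b) (h : (s.map (b ^ ·)).sum = (t.map (b ^ ·)).sum) : s = t :=
  Multiset.ext.2 fun k => by
    rw [count_eq_sum_map_pow_div_pow_mod hs, count_eq_sum_map_pow_div_pow_mod ht, h]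

end Multiset

theorem Finset.eq_image_of_sum_pow_eq {ι : Type*} {b : ℕ} (hb : 1 < b) {T : Finset ℕ}
    {s : Finset ι} {e : ι → ℕ} (hs : s.card < b)
    (h : ∑ i ∈ T, b ^ i = ∑ t ∈ s, b ^ e t) : T = s.image e := by
  have hval : T.val = s.val.map e := by
    refine Multiset.eq_of_sum_map_pow_eq
      (fun i => (Multiset.nodup_iff_count_le_one.1 T.nodup i).trans_lt hb)
      (fun i => (Multiset.count_le_card _ _).trans_lt (by simpa using hs)) ?_
    rw [Multiset.map_map]
    exact h
  rw [← T.val_toFinset, hval]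
  rfl

def IsElementItem (n : ℕ) (Q : ℤ) (w : ℤ × ℤ) : Prop :=
  ∃ i ∈ Finset.Icc 1 n, w = ((10 : ℤ) ^ i, Q - 10 ^ i)

def IsSetItem (n : ℕ) (E Q : ℤ) (w : ℤ × ℤ) : Prop :=
  ∃ a ∈ Finset.Icc 1 n, ∃ b ∈ Finset.Icc 1 n, ∃ c ∈ Finset.Icc 1 n, a ≠ b ∧ a ≠ c ∧ b ≠ c ∧
    w = (E - 10 ^ a - 10 ^ b - 10 ^ c, Q - E + 10 ^ a + 10 ^ b + 10 ^ c)

theorem ten_pow_le_ten_pow_of_mem_Icc {i n : ℕ} (hi : i ∈ Finset.Icc 1 n) :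
    (10 : ℤ) ^ i ≤ 10 ^ n :=
  pow_le_pow_right₀ (by norm_num) (Finset.mem_Icc.1 hi).2

theorem ten_pow_le_sum_Icc_ten_pow {n : ℕ} (hn : 1 ≤ n) :
    (10 : ℤ) ^ n ≤ ∑ i ∈ Finset.Icc 1 n, (10 : ℤ) ^ i :=
  Finset.single_le_sum (f := ((10 : ℤ) ^ ·)) (fun i _ => by positivity)
    (Finset.mem_Icc.2 ⟨hn, le_rfl⟩)

section Items

variable {n : ℕ} {E Q : ℤ} {w : ℤ × ℤ}

theorem IsElementItem.fst_add_snd (h : IsElementItem n Q w) : w.1 + w.2 = Q := by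
  obtain ⟨i, -, rfl⟩ := h
  ring

theorem IsSetItem.fst_add_snd (h : IsSetItem n E Q w) : w.1 + w.2 = Q := by
  obtain ⟨a, -, b, -, c, -, -, -, -, rfl⟩ := h
  ring

theorem IsElementItem.fst_pos (h : IsElementItem n Q w) : 0 < w.1 := by
  obtain ⟨i, -, rfl⟩ := h
  positivity

theorem IsElementItem.fst_le (h : IsElementItem n Q w) : w.1 ≤ 10 ^ n := by
  obtain ⟨i, hi, rfl⟩ := h
  exact ten_pow_le_ten_pow_of_mem_Icc hi

theorem IsSetItem.sub_le_fst (h : IsSetItem n E Q w) : E - 3 * 10 ^ n ≤ w.1 := by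
  obtain ⟨a, ha, b, hb, c, hc, -, -, -, rfl⟩ := h
  linarith [ten_pow_le_ten_pow_of_mem_Icc ha, ten_pow_le_ten_pow_of_mem_Icc hb,
    ten_pow_le_ten_pow_of_mem_Icc hc]

variable {ι : Type*} [Fintype ι] {v : ι → ℤ × ℤ}

theorem sum_fst_eq_of_fst_add_snd_eq (hQ : ∀ t, (v t).1 + (v t).2 = Q)
    (h₁ : ∑ t, (v t).1 ≤ E) (h₂ : ∑ t, (v t).2 ≤ Fintype.card ι * Q - E) :
    ∑ t, (v t).1 = E := by
  have : ∑ t, (v t).1 + ∑ t, (v t).2 = Fintype.card ι * Q := by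
    simp [← Finset.sum_add_distrib, hQ]
  linarith

theorem exists_isSetItem_of_sum_fst_eq (hcard : Fintype.card ι < 10) (hE : 10 * 10 ^ n ≤ E)
    (hv : ∀ t, IsElementItem n Q (v t) ∨ IsSetItem n E Q (v t)) (hsum : ∑ t, (v t).1 = E) :
    ∃ t, IsSetItem n E Q (v t) := by
  by_contra! hnone
  have hle : ∑ t, (v t).1 ≤ ∑ _t : ι, (10 : ℤ) ^ n :=
    Finset.sum_le_sum fun t _ => ((hv t).resolve_right (hnone t)).fst_le
  have : (Fintype.card ι : ℤ) * 10 ^ n < 10 * 10 ^ n := by gcongr; exact_mod_cast hcard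
  simp only [Finset.sum_const, Finset.card_univ, nsmul_eq_mul] at hle
  linarith

theorem isElementItem_of_isSetItem_of_sum_fst_eq (hE : 10 * 10 ^ n ≤ E)
    (hv : ∀ t, IsElementItem n Q (v t) ∨ IsSetItem n E Q (v t)) (hsum : ∑ t, (v t).1 = E)
    {t₀ : ι} (h₀ : IsSetItem n E Q (v t₀)) {t : ι} (ht : t ≠ t₀) : IsElementItem n Q (v t) := by
  classical
  refine (hv t).resolve_right fun h => ?_
  have hnonneg : ∀ s, 0 ≤ (v s).1 := fun s =>
    (hv s).elim (fun h => h.fst_pos.le) fun h =>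
      by linarith [h.sub_le_fst, pow_pos (by norm_num : (0 : ℤ) < 10) n]
  have hpair : (v t₀).1 + (v t).1 ≤ ∑ s, (v s).1 := by
    rw [← Finset.sum_pair (f := fun s => (v s).1) ht.symm]
    exact Finset.sum_le_sum_of_subset_of_nonneg (Finset.subset_univ _) fun s _ _ => hnonneg s
  linarith [h₀.sub_le_fst, h.sub_le_fst, pow_pos (by norm_num : (0 : ℤ) < 10) n]

end Items

theorem eq_image_of_sum_fst_eq {ι : Type*} [Fintype ι] [DecidableEq ι]
    (hcard : Fintype.card ι ≤ 10) {E : ℤ} {v : ι → ℤ × ℤ} {t₀ : ι} {a b c : ℕ} {e : ι → ℕ}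
    (hab : a ≠ b) (hac : a ≠ c) (hbc : b ≠ c) (h₀ : (v t₀).1 = E - 10 ^ a - 10 ^ b - 10 ^ c)
    (he : ∀ t, t ≠ t₀ → (v t).1 = 10 ^ e t) (hsum : ∑ t, (v t).1 = E) :
    ({a, b, c} : Finset ℕ) = (Finset.univ.erase t₀).image e := by
  have hsumℤ : (10 : ℤ) ^ a + 10 ^ b + 10 ^ c = ∑ t ∈ Finset.univ.erase t₀, (10 : ℤ) ^ e t := by
    rw [← Finset.add_sum_erase _ _ (Finset.mem_univ t₀), h₀,
      Finset.sum_congr rfl fun t ht => he t (Finset.ne_of_mem_erase ht)] at hsum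
    linarith
  refine Finset.eq_image_of_sum_pow_eq (b := 10) (by norm_num) ?_ ?_
  · rw [Finset.card_erase_of_mem (Finset.mem_univ t₀), Finset.card_univ]
    omega
  · rw [Finset.sum_insert (by simp [hab, hac]), Finset.sum_pair hbc, ← add_assoc]
    exact_mod_cast hsumℤ

theorem stmt_6_general (n : ℕ) (hn : 1 ≤ n) (E Q : ℤ)
    (hE : E = 10 * ∑ i ∈ Finset.Icc 1 n, (10 : ℤ)^i)
    (v : Fin 4 → ℤ × ℤ)
    (hv : ∀ t, (∃ i ∈ Finset.Icc 1 n, v t = ((10 : ℤ)^i, Q - 10^i)) ∨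
      (∃ a ∈ Finset.Icc 1 n, ∃ b ∈ Finset.Icc 1 n, ∃ c ∈ Finset.Icc 1 n,
        a ≠ b ∧ a ≠ c ∧ b ≠ c ∧
        v t = (E - 10^a - 10^b - 10^c, Q - E + 10^a + 10^b + 10^c)))
    (hsum1 : ∑ t, (v t).1 ≤ E) (hsum2 : ∑ t, (v t).2 ≤ 4 * Q - E) :
    (∑ t, (v t).1 = E) ∧
    ∃ t₀ : Fin 4, ∃ a b c : ℕ,
      a ∈ Finset.Icc 1 n ∧ b ∈ Finset.Icc 1 n ∧ c ∈ Finset.Icc 1 n ∧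
      a ≠ b ∧ a ≠ c ∧ b ≠ c ∧
      v t₀ = (E - 10^a - 10^b - 10^c, Q - E + 10^a + 10^b + 10^c) ∧
      ∃ e : Fin 4 → ℕ,
        (∀ t, t ≠ t₀ → e t ∈ Finset.Icc 1 n ∧ v t = ((10 : ℤ)^(e t), Q - 10^(e t))) ∧
        ({a, b, c} : Finset ℕ) = (Finset.univ.erase t₀).image e := by
  have hv' : ∀ t, IsElementItem n Q (v t) ∨ IsSetItem n E Q (v t) := hv
  have hsum : ∑ t, (v t).1 = E :=
    sum_fst_eq_of_fst_add_snd_eq (fun t => (hv' t).elim (·.fst_add_snd) (·.fst_add_snd)) hsum1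
      (by simpa using hsum2)
  have hE' : 10 * 10 ^ n ≤ E := by linarith [ten_pow_le_sum_Icc_ten_pow hn]
  obtain ⟨t₀, h₀⟩ := exists_isSetItem_of_sum_fst_eq (by simp) hE' hv' hsum
  have hrest : ∀ t, ∃ i, t ≠ t₀ → i ∈ Finset.Icc 1 n ∧ v t = ((10 : ℤ) ^ i, Q - 10 ^ i) := by
    intro t
    by_cases ht : t = t₀
    · exact ⟨0, fun h => absurd ht h⟩
    · obtain ⟨i, hi, hvt⟩ := isElementItem_of_isSetItem_of_sum_fst_eq hE' hv' hsum h₀ ht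
      exact ⟨i, fun _ => ⟨hi, hvt⟩⟩
  choose e he using hrest
  obtain ⟨a, ha, b, hb, c, hc, hab, hac, hbc, hv₀⟩ := h₀
  refine ⟨hsum, t₀, a, b, c, ha, hb, hc, hab, hac, hbc, hv₀, e, he, ?_⟩
  exact eq_image_of_sum_fst_eq (by simp) hab hac hbc (by rw [hv₀])
    (fun t ht => by rw [(he t ht).2]) hsum

/-- If 4 item vectors (element-items or set-items with distinct indices) fit in
the budget `(E, 4Q - E)`, then their first coordinates sum to exactly `E`, exactly one of them
is a set-item, the other three are element-items with indices `i, j, k`, and the set-item's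
index set is exactly `{i, j, k}`. -/
theorem stmt_6 (n : ℕ) (hn : 1 ≤ n) (E Q : ℤ)
    (hE : E = 10 * ∑ i ∈ Finset.Icc 1 n, (10 : ℤ)^i) (hQ : Q = 10 * E)
    (v : Fin 4 → ℤ × ℤ)
    (hv : ∀ t, (∃ i ∈ Finset.Icc 1 n, v t = ((10 : ℤ)^i, Q - 10^i)) ∨
      (∃ a ∈ Finset.Icc 1 n, ∃ b ∈ Finset.Icc 1 n, ∃ c ∈ Finset.Icc 1 n,
        a ≠ b ∧ a ≠ c ∧ b ≠ c ∧
        v t = (E - 10^a - 10^b - 10^c, Q - E + 10^a + 10^b + 10^c)))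
    (hsum1 : ∑ t, (v t).1 ≤ E) (hsum2 : ∑ t, (v t).2 ≤ 4 * Q - E) :
    (∑ t, (v t).1 = E) ∧
    ∃ t₀ : Fin 4, ∃ a b c : ℕ,
      a ∈ Finset.Icc 1 n ∧ b ∈ Finset.Icc 1 n ∧ c ∈ Finset.Icc 1 n ∧
      a ≠ b ∧ a ≠ c ∧ b ≠ c ∧
      v t₀ = (E - 10^a - 10^b - 10^c, Q - E + 10^a + 10^b + 10^c) ∧
      ∃ e : Fin 4 → ℕ,
        (∀ t, t ≠ t₀ → e t ∈ Finset.Icc 1 n ∧ v t = ((10 : ℤ)^(e t), Q - 10^(e t))) ∧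
        ({a, b, c} : Finset ℕ) = (Finset.univ.erase t₀).image e :=
  stmt_6_general n hn E Q hE v hv hsum1 hsum2
end

section
/- Let 0 < δ ≤ 1, s ≥ 1, and let B_1, ..., B_n ∈ [0,1]^s be weight vectors. Define rounded vectors B̃_j as follows: if ‖B_j‖_∞ ≤ δ then B̃_j = B_j; otherwise B̃_j[1] = B_j[1], and for 2 ≤ i ≤ s, B̃_j[i] is B_j[i] rounded up to the smallest value of the form (δ²/s)(1+δ)^h with integer h ≥ 0 that is at least max(B_j[i], δ²/s). Then for every y ∈ [0,1]^n with Σ_j B_j y_j ≤ 1 coordinatewise: Σ_j B̃_j[1] y_j ≤ 1, and for each 2 ≤ i ≤ s, Σ_j B̃_j[i] y_j ≤ 1 + 2δ. -/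
/-! On a large-weight item the rounding loses at most a factor `1 + δ` plus an additive `δ²/s`,
while a small-weight item is not rounded at all. Some coordinate of a large-weight item
exceeds `δ`, so feasibility of `y` bounds its total mass on large-weight items by `s/δ`; the
additive losses therefore contribute at most `(δ²/s)(s/δ) = δ`, and the multiplicative ones
at most `δ`. -/

open Finset

lemma exists_le_mul_pow_le_mul {c x r : ℝ} (hc : 0 < c) (hcx : c ≤ x) (hr : 1 < r) :
    ∃ h : ℕ, x ≤ c * r ^ h ∧ c * r ^ h ≤ r * x := by
  obtain ⟨h, hle, hlt⟩ := exists_nat_pow_near ((one_le_div hc).2 hcx) hr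
  refine ⟨h + 1, ?_, ?_⟩
  · exact ((div_lt_iff₀' hc).1 hlt).le
  · calc c * r ^ (h + 1) = r * (c * r ^ h) := by ring
      _ ≤ r * x := by gcongr; exact (le_div_iff₀' hc).1 hle

lemma le_mul_add_of_forall_le_mul_pow {δ c b t : ℝ} (hδ : 0 < δ) (hc : 0 < c) (hb : 0 ≤ b)
    (hmin : ∀ h : ℕ, max b c ≤ c * (1 + δ) ^ h → t ≤ c * (1 + δ) ^ h) :
    t ≤ (1 + δ) * b + c := by
  rcases le_total b c with hbc | hcb
  · have ht := hmin 0 (by simp [hbc])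
    simp only [pow_zero, mul_one] at ht
    nlinarith
  · obtain ⟨h, hle, hge⟩ := exists_le_mul_pow_le_mul hc hcb (by linarith : 1 < 1 + δ)
    linarith [hmin h (by rwa [max_eq_left hcb])]

section LargeItems

variable {ι κ : Type*} [Fintype ι] [Fintype κ]

noncomputable def largeItems (B : ι → κ → ℝ) (δ : ℝ) : Finset ι :=
  univ.filter fun j => ∃ i, δ < B j i

lemma mem_largeItems {B : ι → κ → ℝ} {δ : ℝ} {j : ι} :
    j ∈ largeItems B δ ↔ ∃ i, δ < B j i := by
  simp [largeItems]

lemma sum_largeItems_le_card_div {B : ι → κ → ℝ} {y : ι → ℝ} {δ : ℝ} (hδ : 0 < δ)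
    (hB : ∀ j i, 0 ≤ B j i) (hy : ∀ j, 0 ≤ y j) (hfeas : ∀ i, ∑ j, B j i * y j ≤ 1) :
    ∑ j ∈ largeItems B δ, y j ≤ Fintype.card κ / δ := by
  have hlarge : ∀ j ∈ largeItems B δ, δ * y j ≤ ∑ i, B j i * y j := by
    intro j hj
    obtain ⟨i, hi⟩ := mem_largeItems.1 hj
    calc δ * y j ≤ B j i * y j := by gcongr; exact hy j
      _ ≤ ∑ i, B j i * y j :=
        single_le_sum (fun i _ => mul_nonneg (hB j i) (hy j)) (mem_univ i)
  rw [le_div_iff₀' hδ, mul_sum]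
  calc ∑ j ∈ largeItems B δ, δ * y j ≤ ∑ j ∈ largeItems B δ, ∑ i, B j i * y j :=
        sum_le_sum hlarge
    _ ≤ ∑ j, ∑ i, B j i * y j :=
        sum_le_sum_of_subset_of_nonneg (subset_univ _)
          fun j _ _ => sum_nonneg fun i _ => mul_nonneg (hB j i) (hy j)
    _ = ∑ i, ∑ j, B j i * y j := sum_comm
    _ ≤ ∑ _i : κ, 1 := sum_le_sum fun i _ => hfeas i
    _ = Fintype.card κ := by simp

end LargeItems

lemma sum_mul_le_of_le_mul_add_ite {ι : Type*} [Fintype ι] [DecidableEq ι] (L : Finset ι)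
    {b t y : ι → ℝ} {r c : ℝ} (hy : ∀ j, 0 ≤ y j)
    (ht : ∀ j, t j ≤ r * b j + if j ∈ L then c else 0) :
    ∑ j, t j * y j ≤ r * ∑ j, b j * y j + c * ∑ j ∈ L, y j := by
  calc ∑ j, t j * y j ≤ ∑ j, (r * b j + if j ∈ L then c else 0) * y j :=
        sum_le_sum fun j _ => mul_le_mul_of_nonneg_right (ht j) (hy j)
    _ = r * ∑ j, b j * y j + c * ∑ j ∈ L, y j := by
        simp only [add_mul, ite_mul, zero_mul, sum_add_distrib, sum_ite_mem, univ_inter,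
          mul_sum, mul_assoc]

theorem stmt_8_general (n s : ℕ) (hs : 0 < s) (δ : ℝ) (hδ0 : 0 < δ)
    (B Bt : Fin n → Fin s → ℝ)
    (hB0 : ∀ j i, 0 ≤ B j i)
    (hsmall : ∀ j, (∀ i, B j i ≤ δ) → Bt j = B j)
    (hlarge : ∀ j, ¬ (∀ i, B j i ≤ δ) →
      Bt j ⟨0, hs⟩ = B j ⟨0, hs⟩ ∧
      ∀ i : Fin s, (i : ℕ) ≠ 0 →
        (∃ h : ℕ, Bt j i = (δ^2 / s) * (1+δ)^h) ∧
        max (B j i) (δ^2 / s) ≤ Bt j i ∧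
        (∀ h : ℕ, max (B j i) (δ^2 / s) ≤ (δ^2 / s) * (1+δ)^h →
          Bt j i ≤ (δ^2 / s) * (1+δ)^h)) :
    ∀ y : Fin n → ℝ, (∀ j, 0 ≤ y j) → (∀ j, y j ≤ 1) →
      (∀ i, ∑ j, B j i * y j ≤ 1) →
      (∑ j, Bt j ⟨0, hs⟩ * y j ≤ 1) ∧
      (∀ i : Fin s, (i : ℕ) ≠ 0 → ∑ j, Bt j i * y j ≤ 1 + 2*δ) := by
  intro y hy0 _ hfeas
  have hprincipal : ∀ j, Bt j ⟨0, hs⟩ = B j ⟨0, hs⟩ := fun j => by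
    by_cases h : ∀ i, B j i ≤ δ
    · rw [hsmall j h]
    · exact (hlarge j h).1
  refine ⟨by simpa only [hprincipal] using hfeas ⟨0, hs⟩, fun i hi => ?_⟩
  have hround : ∀ j,
      Bt j i ≤ (1 + δ) * B j i + if j ∈ largeItems B δ then δ^2 / s else 0 := by
    intro j
    by_cases h : ∀ i, B j i ≤ δ
    · have hj : j ∉ largeItems B δ := by simpa [mem_largeItems] using h
      rw [hsmall j h, if_neg hj]
      nlinarith [hB0 j i]
    · have hj : j ∈ largeItems B δ := by simpa [mem_largeItems] using h
      rw [if_pos hj]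
      exact le_mul_add_of_forall_le_mul_pow hδ0 (by positivity) (hB0 j i)
        ((hlarge j h).2 i hi).2.2
  have hmass := sum_largeItems_le_card_div hδ0 hB0 hy0 hfeas
  rw [Fintype.card_fin] at hmass
  calc ∑ j, Bt j i * y j
      ≤ (1 + δ) * ∑ j, B j i * y j + δ^2 / s * ∑ j ∈ largeItems B δ, y j :=
        sum_mul_le_of_le_mul_add_ite _ hy0 hround
    _ ≤ (1 + δ) * 1 + δ^2 / s * (s / δ) := by gcongr; exact hfeas i
    _ = 1 + 2 * δ := by field_simp; ring

/-- Rounding up the non-principal coordinates of large-weight items to powers of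
`(1+δ)` times `δ²/s` preserves feasibility up to `1 + 2δ` in the non-principal coordinates. -/
theorem stmt_8 (n s : ℕ) (hs : 0 < s) (δ : ℝ) (hδ0 : 0 < δ) (hδ1 : δ ≤ 1)
    (B Bt : Fin n → Fin s → ℝ)
    (hB0 : ∀ j i, 0 ≤ B j i) (hB1 : ∀ j i, B j i ≤ 1)
    (hsmall : ∀ j, (∀ i, B j i ≤ δ) → Bt j = B j)
    (hlarge : ∀ j, ¬ (∀ i, B j i ≤ δ) →
      Bt j ⟨0, hs⟩ = B j ⟨0, hs⟩ ∧
      ∀ i : Fin s, (i : ℕ) ≠ 0 →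
        (∃ h : ℕ, Bt j i = (δ^2 / s) * (1+δ)^h) ∧
        max (B j i) (δ^2 / s) ≤ Bt j i ∧
        (∀ h : ℕ, max (B j i) (δ^2 / s) ≤ (δ^2 / s) * (1+δ)^h →
          Bt j i ≤ (δ^2 / s) * (1+δ)^h)) :
    ∀ y : Fin n → ℝ, (∀ j, 0 ≤ y j) → (∀ j, y j ≤ 1) →
      (∀ i, ∑ j, B j i * y j ≤ 1) →
      (∑ j, Bt j ⟨0, hs⟩ * y j ≤ 1) ∧
      (∀ i : Fin s, (i : ℕ) ≠ 0 → ∑ j, Bt j i * y j ≤ 1 + 2*δ) :=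
  stmt_8_general n s hs δ hδ0 B Bt hB0 hsmall hlarge
end
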